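/- arXiv:0805.2066 — 3 statements merged into one kernel-verified Lean document; each statement's English description precedes it below -/
import Mathlib

section
/- In ℤ[α,β,δ], the polynomial q2 = βδ⁴ + β³δ³ + αδ³ − βδ² − β³δ − αδ lies in the ideal generated by p1 and p2. -/
open MvPolynomial

theorem stmt_11 :
    let α : MvPolynomial (Fin 3) ℤ := X 0
    let β : MvPolynomial (Fin 3) ℤ := X 1
    let δ : MvPolynomial (Fin 3) ℤ := X 2
    let p1 := α^2 * δ + 2 * α * β * δ^2 - δ^2 + β^2 * δ
    let p2 := α * β * δ^3 + α^2 * δ^2 + β^2 * δ^2 + α * β * δ - δ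
    let q2 := β * δ^4 + β^3 * δ^3 + α * δ^3 - β * δ^2 - β^3 * δ - α * δ
    q2 ∈ Ideal.span {p1, p2} := by
  intro α β δ p1 p2 q2
  rw [Ideal.mem_span_pair]
  exact ⟨-β - β*δ^2 - α*δ, 2*β*δ + α, by simp only [p1, p2, q2]; ring⟩
end

section
/- In ℤ[α,β,δ], the polynomial q1 = δ³β⁴ − δβ⁴ + δ⁴β² − δ²β² + δ³ − δ lies in the ideal generated by p1 and p2. -/
open MvPolynomial

theorem stmt_12 :
    let α : MvPolynomial (Fin 3) ℤ := X 0
    let β : MvPolynomial (Fin 3) ℤ := X 1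
    let δ : MvPolynomial (Fin 3) ℤ := X 2
    let p1 := α^2 * δ + 2 * α * β * δ^2 - δ^2 + β^2 * δ
    let p2 := α * β * δ^3 + α^2 * δ^2 + β^2 * δ^2 + α * β * δ - δ
    let q1 := δ^3 * β^4 - δ * β^4 + δ^4 * β^2 - δ^2 * β^2 + δ^3 - δ
    q1 ∈ Ideal.span {p1, p2} := by
  intro α β δ p1 p2 q1
  rw [Ideal.mem_span_pair]
  exact ⟨-(δ + β^2 + β^2*δ^2 + α*β*δ), 1 + 2*β^2*δ + α*β, by simp only [p1, p2, q1]; ring⟩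
end

section
/- If α, β, δ are complex numbers satisfying p1 = 0 and p2 = 0 with δ ≠ 0 and δ ≠ ±1, then β = α⁻¹ and δ = −α² − α⁻². -/
theorem stmt_18 (α β δ : ℂ)
    (hp1 : α^2 * δ + 2 * α * β * δ^2 - δ^2 + β^2 * δ = 0)
    (hp2 : α * β * δ^3 + α^2 * δ^2 + β^2 * δ^2 + α * β * δ - δ = 0)
    (h0 : δ ≠ 0) (h1 : δ ≠ 1) (h2 : δ ≠ -1) :
    β = α⁻¹ ∧ δ = -α^2 - α⁻¹^2 := by
  have key : δ * ((δ - 1) * ((δ + 1) * (1 - α * β))) = 0 := by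
    linear_combination hp2 - δ * hp1
  have hab : α * β = 1 := by
    rcases mul_eq_zero.mp key with h | h
    · exact absurd h h0
    rcases mul_eq_zero.mp h with h | h
    · exact absurd (sub_eq_zero.mp h) h1
    rcases mul_eq_zero.mp h with h | h
    · exact absurd (eq_neg_of_add_eq_zero_left h) h2
    · linear_combination -h
  have hα : α ≠ 0 := by
    rintro rfl; simp at hab
  have hβ : β = α⁻¹ := by
    field_simp
    linear_combination hab
  refine ⟨hβ, ?_⟩
  have hδ : δ * (δ + α^2 + β^2) = 0 := by
    linear_combination hp1 - 2 * δ^2 * hab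
  rcases mul_eq_zero.mp hδ with h | h
  · exact absurd h h0
  subst hβ
  field_simp at h ⊢
  linear_combination h
end
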